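/- Let q be a positive integer, χ₁,…,χ_s Dirichlet characters mod q, F₁,…,F_R ∈ ℤ[x₁,…,x_s], a ∈ ℤ^R. Set C = ∑_{h mod q} χ₁(h₁)⋯χ_s(h_s) e(a·F(h)/q), G(h;j)=F(h₁j₁,…,h_sj_s), and L(h,h';j,j') = G(h;j) − G(h;j') − G(h';j) + G(h';j'). Then |C|⁴ ≤ ∑_{h,h',j,j' mod q} e(a·L(h,h';j,j')/q), where the right-hand side is a sum over all quadruples of tuples in (ℤ/qℤ)^s (in particular the right-hand side is a nonnegative real number). -/

import Mathlib

/-!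
Write the sum as `C = ∑ h, ψ h * g h` with `ψ = ∏ i, χ i` and `g = e (a·F / q)`. For a unit `j`
the substitution `h ↦ h * j` gives `C = ψ j * ∑ h, ψ h * g (h * j)`, and `ψ` vanishes off the
units, so `N * ‖C‖² ≤ ∑ j, ‖∑ h, ψ h * g (h * j)‖²` with `N = ∑ h, ‖ψ h‖²`. Expanding the square
on the right and applying Cauchy–Schwarz over pairs `(h, h')` bounds it by `N` times the square
root of `∑ h h', ‖∑ j, g (h * j) * conj (g (h' * j))‖²`, and this last sum, expanded, is the
exponential sum of `L`.
-/

open BigOperators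

noncomputable def e (x : ℝ) : ℂ := Complex.exp (2 * (Real.pi : ℂ) * Complex.I * (x : ℂ))

noncomputable def Gv (q s R : ℕ) [NeZero q] (F : Fin R → MvPolynomial (Fin s) ℤ)
    (h j : Fin s → ZMod q) (r : Fin R) : ℤ :=
  MvPolynomial.eval (fun t => (((h t) * (j t)).val : ℤ)) (F r)

open Finset ComplexConjugate

lemma e_sub (x y : ℝ) : e (x - y) = e x * conj (e y) := by
  simp only [e, ← Complex.exp_conj, ← Complex.exp_add, map_mul, Complex.conj_ofReal,
    Complex.conj_I, map_ofNat]
  push_cast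
  ring_nf

lemma ofReal_sum_norm_sq_sum_mul {ι κ : Type*} [Fintype ι] [Fintype κ] (a : ι → ℂ)
    (b : ι → κ → ℂ) :
    ((∑ j, ‖∑ h, a h * b h j‖ ^ 2 : ℝ) : ℂ)
      = ∑ h, ∑ h', a h * conj (a h') * ∑ j, b h j * conj (b h' j) := by
  simp_rw [mul_sum, Complex.ofReal_sum, Complex.ofReal_pow, ← Complex.mul_conj', map_sum,
    sum_mul_sum]
  rw [sum_comm]
  refine sum_congr rfl fun h _ => ?_
  rw [sum_comm]
  refine sum_congr rfl fun h' _ => sum_congr rfl fun j _ => ?_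
  rw [map_mul]
  ring

lemma sq_sum_norm_sq_sum_mul_le {ι κ : Type*} [Fintype ι] [Fintype κ] (a : ι → ℂ)
    (b : ι → κ → ℂ) :
    (∑ j, ‖∑ h, a h * b h j‖ ^ 2) ^ 2
      ≤ (∑ h, ‖a h‖ ^ 2) ^ 2 * ∑ h, ∑ h', ‖∑ j, b h j * conj (b h' j)‖ ^ 2 := by
  set S : ι → ι → ℂ := fun h h' => ∑ j, b h j * conj (b h' j)
  have hT : ∑ j, ‖∑ h, a h * b h j‖ ^ 2 ≤ ∑ h, ∑ h', ‖a h‖ * ‖a h'‖ * ‖S h h'‖ := by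
    calc ∑ j, ‖∑ h, a h * b h j‖ ^ 2
        = ‖((∑ j, ‖∑ h, a h * b h j‖ ^ 2 : ℝ) : ℂ)‖ :=
          (Complex.norm_of_nonneg (by positivity)).symm
      _ ≤ ∑ h, ∑ h', ‖a h * conj (a h') * S h h'‖ := by
          rw [ofReal_sum_norm_sq_sum_mul]
          exact (norm_sum_le _ _).trans (sum_le_sum fun h _ => norm_sum_le _ _)
      _ = ∑ h, ∑ h', ‖a h‖ * ‖a h'‖ * ‖S h h'‖ := by simp only [norm_mul, Complex.norm_conj]
  have hCS := sum_mul_sq_le_sq_mul_sq univ (fun p : ι × ι => ‖a p.1‖ * ‖a p.2‖)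
    (fun p => ‖S p.1 p.2‖)
  simp only [Fintype.sum_prod_type, mul_pow, ← sum_mul_sum] at hCS
  calc (∑ j, ‖∑ h, a h * b h j‖ ^ 2) ^ 2
      ≤ (∑ h, ∑ h', ‖a h‖ * ‖a h'‖ * ‖S h h'‖) ^ 2 := by gcongr
    _ ≤ _ := by rw [sq (∑ h, ‖a h‖ ^ 2)]; exact hCS

namespace MulChar

def pi {ι : Type*} [Fintype ι] {M : ι → Type*} [∀ i, CommMonoid (M i)] {R : Type*}
    [CommMonoidWithZero R] (χ : ∀ i, MulChar (M i) R) : MulChar (∀ i, M i) R where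
  toFun h := ∏ i, χ i (h i)
  map_one' := by simp
  map_mul' h h' := by simp [prod_mul_distrib]
  map_nonunit' h hh := by
    obtain ⟨i, hi⟩ := not_forall.mp (mt Pi.isUnit_iff.mpr hh)
    exact prod_eq_zero (mem_univ i) ((χ i).map_nonunit hi)

variable {M : Type*} [CommMonoid M]

lemma norm_apply_le_one [Finite M] (ψ : MulChar M ℂ) (h : M) : ‖ψ h‖ ≤ 1 := by
  by_cases hh : IsUnit h
  · obtain ⟨u, rfl⟩ := hh
    refine ((pow_eq_one_iff_of_nonneg (norm_nonneg _) (Nat.card_pos (α := Mˣ)).ne').mp ?_).le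
    rw [← norm_pow, ← map_pow, ← Units.val_pow_eq_pow_val, pow_card_eq_one', Units.val_one,
      map_one, norm_one]
  · simp [ψ.map_nonunit hh]

variable [Fintype M]

lemma sum_mul_eq_mul_sum_mul_right (ψ : MulChar M ℂ) (g : M → ℂ) (u : Mˣ) :
    ∑ h, ψ h * g h = ψ u * ∑ h, ψ h * g (h * u) := by
  rw [mul_sum]
  exact (Fintype.sum_equiv (Units.mulRight u) _ _ fun h => by simp [map_mul]; ring).symm

lemma norm_apply_mul_norm_sum_le (ψ : MulChar M ℂ) (g : M → ℂ) (j : M) :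
    ‖ψ j‖ * ‖∑ h, ψ h * g h‖ ≤ ‖∑ h, ψ h * g (h * j)‖ := by
  by_cases hj : IsUnit j
  · obtain ⟨u, rfl⟩ := hj
    have hψ := ψ.norm_apply_le_one u
    rw [ψ.sum_mul_eq_mul_sum_mul_right g u, norm_mul, ← mul_assoc]
    exact mul_le_of_le_one_left (norm_nonneg _) (mul_le_one₀ hψ (norm_nonneg _) hψ)
  · simp [ψ.map_nonunit hj]

theorem norm_sum_mul_pow_four_le (ψ : MulChar M ℂ) (g : M → ℂ) :
    ‖∑ h, ψ h * g h‖ ^ 4 ≤ ∑ h, ∑ h', ‖∑ j, g (h * j) * conj (g (h' * j))‖ ^ 2 := by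
  set N := ∑ h, ‖ψ h‖ ^ 2
  have hN : 0 < N := by
    refine lt_of_lt_of_le ?_ (single_le_sum (fun h _ => sq_nonneg ‖ψ h‖) (mem_univ 1))
    simp
  have hfirst : N * ‖∑ h, ψ h * g h‖ ^ 2 ≤ ∑ j, ‖∑ h, ψ h * g (h * j)‖ ^ 2 := by
    rw [sum_mul]
    exact sum_le_sum fun j _ => by
      rw [← mul_pow]; gcongr; exact ψ.norm_apply_mul_norm_sum_le g j
  have hsecond := sq_sum_norm_sq_sum_mul_le ψ fun h j => g (h * j)
  have : N ^ 2 * ‖∑ h, ψ h * g h‖ ^ 4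
      ≤ N ^ 2 * ∑ h, ∑ h', ‖∑ j, g (h * j) * conj (g (h' * j))‖ ^ 2 := by
    calc N ^ 2 * ‖∑ h, ψ h * g h‖ ^ 4 = (N * ‖∑ h, ψ h * g h‖ ^ 2) ^ 2 := by ring
      _ ≤ _ := by gcongr
      _ ≤ _ := hsecond
  exact le_of_mul_le_mul_left this (pow_pos hN 2)

end MulChar

lemma sum_e_eq_ofReal_sum_norm_sq {ι κ : Type*} [Fintype ι] [Fintype κ] (A : ι → κ → ℝ) :
    ∑ h, ∑ h', ∑ j, ∑ j', e (A h j - A h j' - A h' j + A h' j')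
      = ((∑ h, ∑ h', ‖∑ j, e (A h j) * conj (e (A h' j))‖ ^ 2 : ℝ) : ℂ) := by
  push_cast
  refine sum_congr rfl fun h _ => sum_congr rfl fun h' _ => ?_
  rw [← Complex.mul_conj', map_sum, sum_mul_sum]
  refine sum_congr rfl fun j _ => sum_congr rfl fun j' _ => ?_
  rw [show A h j - A h j' - A h' j + A h' j' = (A h j - A h' j) - (A h j' - A h' j') by ring,
    e_sub, e_sub, e_sub, map_mul, Complex.conj_conj]

/-- After two applications of Cauchy–Schwarz:
`|C|⁴ ≤ ∑_{h,h',j,j' mod q} e(a·L(h,h';j,j')/q)` with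
`L = G(h;j) − G(h;j') − G(h';j) + G(h';j')`; in particular the right-hand side is a
nonnegative real number. -/
theorem stmt3 (q : ℕ) [NeZero q] (s R : ℕ) (χ : Fin s → DirichletCharacter ℂ q)
    (F : Fin R → MvPolynomial (Fin s) ℤ) (a : Fin R → ℤ) :
    (∑ h : Fin s → ZMod q, ∑ h' : Fin s → ZMod q, ∑ j : Fin s → ZMod q, ∑ j' : Fin s → ZMod q,
        e ((((∑ r, a r * (Gv q s R F h j r - Gv q s R F h j' r
            - Gv q s R F h' j r + Gv q s R F h' j' r)) : ℤ) : ℝ) / q)).im = 0 ∧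
    ‖∑ h : Fin s → ZMod q, (∏ i, χ i (h i)) *
        e ((((∑ r, a r * MvPolynomial.eval (fun t => ((h t).val : ℤ)) (F r)) : ℤ) : ℝ) / q)‖ ^ 4
      ≤ (∑ h : Fin s → ZMod q, ∑ h' : Fin s → ZMod q, ∑ j : Fin s → ZMod q, ∑ j' : Fin s → ZMod q,
          e ((((∑ r, a r * (Gv q s R F h j r - Gv q s R F h j' r
              - Gv q s R F h' j r + Gv q s R F h' j' r)) : ℤ) : ℝ) / q)).re := by
  set f : (Fin s → ZMod q) → ℝ := fun h =>
    ((∑ r, a r * MvPolynomial.eval (fun t => ((h t).val : ℤ)) (F r) : ℤ) : ℝ) / q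
  have hL : ∀ h h' j j' : Fin s → ZMod q,
      (((∑ r, a r * (Gv q s R F h j r - Gv q s R F h j' r
          - Gv q s R F h' j r + Gv q s R F h' j' r)) : ℤ) : ℝ) / q
        = f (h * j) - f (h * j') - f (h' * j) + f (h' * j') := by
    intro h h' j j'
    simp only [f, Gv, Pi.mul_apply, mul_sub, mul_add, sum_sub_distrib, sum_add_distrib]
    push_cast
    ring
  simp only [hL, sum_e_eq_ofReal_sum_norm_sq fun h j => f (h * j), Complex.ofReal_im,
    Complex.ofReal_re, true_and]
  exact (MulChar.pi χ).norm_sum_mul_pow_four_le fun h => e (f h)
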